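/- arXiv:2105.04157 — 2 statements merged into one kernel-verified Lean document; each statement's English description precedes it below -/
import Mathlib

section
/- Let U ∈ ℝ^{d×d} be a fixed matrix and let X ∈ ℝ^{n×d} be a random matrix such that vec(Xᵀ) follows the Gaussian distribution N(0, Υ_X) for a positive semidefinite matrix Υ_X ∈ ℝ^{nd×nd}. Then there exists an absolute constant c > 0 such that for every u > 0, P(|tr(X U Xᵀ) − E[tr(X U Xᵀ)]| > u) ≤ 2 exp(−c · min(u² / (n ‖Υ_X‖² ‖U‖_F²), u / (‖Υ_X‖ ‖U‖_F))). -/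
open MeasureTheory ProbabilityTheory Matrix
open scoped Classical ProbabilityTheory

noncomputable section

/-- The Frobenius norm of a real matrix. -/
def frobNorm {k l : Type*} [Fintype k] [Fintype l] (M : Matrix k l ℝ) : ℝ :=
  Real.sqrt (∑ i, ∑ j, (M i j) ^ 2)

/-- The spectral (`ℓ₂ → ℓ₂` operator) norm of a real matrix. -/
def specNorm {k l : Type*} [Fintype k] [Fintype l] (M : Matrix k l ℝ) : ℝ :=
  sSup {r : ℝ | ∃ v : l → ℝ, (∑ j, (v j) ^ 2) ≤ 1 ∧ r = Real.sqrt (∑ i, (M.mulVec v i) ^ 2)}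

/-- The trace inner product `⟨A, B⟩ = tr(Aᵀ B)` of two real matrices. -/
def mInner {k l : Type*} [Fintype k] [Fintype l] (A B : Matrix k l ℝ) : ℝ :=
  ∑ i, ∑ j, A i j * B i j

instance matrixMeasurableSpace {k l : Type*} : MeasurableSpace (Matrix k l ℝ) :=
  inferInstanceAs (MeasurableSpace (k → l → ℝ))

/-- The standard Gaussian measure on `ι → ℝ` (i.i.d. `N(0,1)` coordinates). -/
def stdGaussian (ι : Type*) [Fintype ι] : Measure (ι → ℝ) :=
  Measure.pi fun _ => gaussianReal 0 1

/-- The positive semidefinite square root of a positive semidefinite matrix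
(the definition removed from Mathlib, restated with its old value). -/
def Matrix.PosSemidef.sqrt {n : Type*} [Fintype n] [DecidableEq n] {A : Matrix n n ℝ}
    (hA : A.PosSemidef) : Matrix n n ℝ :=
  (hA.1.eigenvectorUnitary : Matrix n n ℝ) * diagonal (Real.sqrt ∘ hA.1.eigenvalues) *
    (star hA.1.eigenvectorUnitary : Matrix n n ℝ)

/-- The centered Gaussian measure `N(0, Υ)` on `ι → ℝ`, with positive semidefinite
covariance matrix `Υ`, realized as the law of `Υ^{1/2} g` for a standard Gaussian `g`. -/
def vecGaussian {ι : Type*} [Fintype ι] [DecidableEq ι] {Υ : Matrix ι ι ℝ}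
    (hΥ : Υ.PosSemidef) : Measure (ι → ℝ) :=
  (stdGaussian ι).map hΥ.sqrt.mulVec

/-- The Gaussian width `w(C) = E sup_{M ∈ C} ⟨G, M⟩` of a set of matrices, where `G` has
i.i.d. standard Gaussian entries. -/
def gaussianWidthM {k l : Type*} [Fintype k] [Fintype l] (C : Set (Matrix k l ℝ)) : ℝ :=
  ∫ G : Matrix k l ℝ, sSup ((fun M : Matrix k l ℝ => ∑ i, ∑ j, G i j * M i j) '' C)
    ∂((Measure.pi fun _ : k => Measure.pi fun _ : l => gaussianReal 0 1) :
        Measure (Matrix k l ℝ))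

/-- Matrices with at most `s` nonzero entries. -/
def sparseSet {k l : Type*} [Fintype k] [Fintype l] (s : ℕ) : Set (Matrix k l ℝ) :=
  {M | (Finset.univ.filter fun p : k × l => M p.1 p.2 ≠ 0).card ≤ s}

/-- The unit sphere in Frobenius norm. -/
def frobSphere (k l : Type*) [Fintype k] [Fintype l] : Set (Matrix k l ℝ) :=
  {M | frobNorm M = 1}


/-!
Write `vec(Xᵀ) = Υ^{1/2} g` with `g` standard Gaussian and `tr(X U Xᵀ) = vec(Xᵀ)ᵀ (I ⊗ U) vec(Xᵀ)`.
The trace is then the Gaussian quadratic form `gᵀ B g`, where `B` is the symmetric part of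
`Υ^{1/2} (I ⊗ U) Υ^{1/2}`, and by rotation invariance of `g` it has the law of `∑ λᵢ gᵢ²`,
`λᵢ` the eigenvalues of `B`. For `|s| ≤ 1/4` the centred variables `gᵢ² - 1` have moment
generating function at most `exp (4 s²)`, so Chernoff's bound at the optimal `t` gives the tail
`2 exp (-(1/16) min (u² / ∑ λᵢ², u / maxᵢ |λᵢ|))`. Finally `maxᵢ |λᵢ| ≤ ‖B‖ ≤ ‖Υ‖ ‖U‖_F` and
`∑ λᵢ² = ‖B‖_F² ≤ n ‖Υ‖² ‖U‖_F²`.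
-/

section MatrixNorms

open WithLp Metric
open scoped Matrix.Norms.L2Operator

variable {l m n : Type*} [Fintype l] [Fintype m] [Fintype n]

lemma frobNorm_nonneg (M : Matrix m n ℝ) : 0 ≤ frobNorm M := Real.sqrt_nonneg _

lemma frobNorm_sq (M : Matrix m n ℝ) : frobNorm M ^ 2 = ∑ i, ∑ j, M i j ^ 2 :=
  Real.sq_sqrt (by positivity)

lemma frobNorm_eq_norm_toLp_vec (M : Matrix m n ℝ) : frobNorm M = ‖toLp 2 (vec M)‖ := by
  rw [EuclideanSpace.norm_eq, frobNorm, Fintype.sum_prod_type, Finset.sum_comm]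
  simp

lemma frobNorm_transpose (M : Matrix m n ℝ) : frobNorm Mᵀ = frobNorm M := by
  rw [frobNorm, frobNorm, Finset.sum_comm]
  rfl

lemma frobNorm_kronecker {p : Type*} [Fintype p] (A : Matrix l m ℝ) (B : Matrix n p ℝ) :
    frobNorm (kronecker A B) = frobNorm A * frobNorm B := by
  rw [frobNorm, frobNorm, frobNorm, ← Real.sqrt_mul (by positivity), Finset.sum_mul_sum]
  simp_rw [Finset.sum_mul_sum, Fintype.sum_prod_type, kronecker, kroneckerMap_apply, mul_pow]

lemma frobNorm_one [DecidableEq n] : frobNorm (1 : Matrix n n ℝ) = √(Fintype.card n) := by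
  simp [frobNorm, one_apply, Finset.card_univ]

lemma specNorm_eq_opNorm (A : Matrix m n ℝ) : specNorm A = ‖A‖ := by
  rw [l2_opNorm_def, ← ContinuousLinearMap.sSup_unitClosedBall_eq_norm, specNorm]
  congr 1
  ext r
  simp only [Set.mem_ofPred_eq, Set.mem_image, mem_closedBall_zero_iff]
  constructor
  · rintro ⟨v, hv, rfl⟩
    exact ⟨toLp 2 v, by simpa [EuclideanSpace.norm_eq] using hv, by simp [EuclideanSpace.norm_eq]⟩
  · rintro ⟨x, hx, rfl⟩
    exact ⟨ofLp x, by simpa [EuclideanSpace.norm_eq] using hx, by simp [EuclideanSpace.norm_eq]⟩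

lemma specNorm_nonneg (A : Matrix m n ℝ) : 0 ≤ specNorm A :=
  specNorm_eq_opNorm A ▸ norm_nonneg A

lemma opNorm_transpose (A : Matrix m n ℝ) : ‖Aᵀ‖ = ‖A‖ := by
  classical
  rw [← conjTranspose_eq_transpose_of_trivial, l2_opNorm_conjTranspose]

lemma opNorm_le_frobNorm (A : Matrix m n ℝ) : ‖A‖ ≤ frobNorm A := by
  rw [l2_opNorm_def]
  refine ContinuousLinearMap.opNorm_le_bound _ (frobNorm_nonneg A) fun x => ?_
  refine (pow_le_pow_iff_left₀ (norm_nonneg _) (mul_nonneg (frobNorm_nonneg A) (norm_nonneg x))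
    two_ne_zero).mp ?_
  rw [mul_pow, frobNorm_sq, EuclideanSpace.real_norm_sq_eq, EuclideanSpace.real_norm_sq_eq,
    Finset.sum_mul]
  exact Finset.sum_le_sum fun i _ => Finset.sum_mul_sq_le_sq_mul_sq _ _ _

lemma sum_sq_mulVec_le (A : Matrix m n ℝ) (v : n → ℝ) :
    ∑ i, (A *ᵥ v) i ^ 2 ≤ ‖A‖ ^ 2 * ∑ j, v j ^ 2 := by
  have h := pow_le_pow_left₀ (norm_nonneg _) (l2_opNorm_mulVec A (toLp 2 v)) 2
  rwa [mul_pow, EuclideanSpace.real_norm_sq_eq, EuclideanSpace.real_norm_sq_eq] at h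

lemma frobNorm_mul_le_opNorm_mul (A : Matrix l m ℝ) (B : Matrix m n ℝ) :
    frobNorm (A * B) ≤ ‖A‖ * frobNorm B := by
  refine (pow_le_pow_iff_left₀ (frobNorm_nonneg _) (mul_nonneg (norm_nonneg A) (frobNorm_nonneg B))
    two_ne_zero).mp ?_
  rw [mul_pow, frobNorm_sq, frobNorm_sq, Finset.sum_comm,
    Finset.sum_comm (f := fun i j => B i j ^ 2), Finset.mul_sum]
  exact Finset.sum_le_sum fun j _ => sum_sq_mulVec_le A fun k => B k j

lemma frobNorm_mul_le_mul_opNorm (A : Matrix l m ℝ) (B : Matrix m n ℝ) :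
    frobNorm (A * B) ≤ frobNorm A * ‖B‖ := by
  rw [← frobNorm_transpose, transpose_mul, ← opNorm_transpose B, ← frobNorm_transpose A, mul_comm]
  exact frobNorm_mul_le_opNorm_mul _ _

lemma opNorm_transpose_mul_mul_le (R : Matrix m n ℝ) (A : Matrix m m ℝ) :
    ‖Rᵀ * A * R‖ ≤ ‖R‖ ^ 2 * ‖A‖ :=
  calc ‖Rᵀ * A * R‖ ≤ ‖Rᵀ‖ * ‖A‖ * ‖R‖ :=
        (l2_opNorm_mul _ _).trans (mul_le_mul_of_nonneg_right (l2_opNorm_mul _ _) (norm_nonneg _))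
    _ = ‖R‖ ^ 2 * ‖A‖ := by rw [opNorm_transpose]; ring

lemma frobNorm_transpose_mul_mul_le (R : Matrix m n ℝ) (A : Matrix m m ℝ) :
    frobNorm (Rᵀ * A * R) ≤ ‖R‖ ^ 2 * frobNorm A :=
  calc frobNorm (Rᵀ * A * R) ≤ ‖Rᵀ‖ * (frobNorm A * ‖R‖) := by
        rw [Matrix.mul_assoc]
        exact (frobNorm_mul_le_opNorm_mul _ _).trans
          (mul_le_mul_of_nonneg_left (frobNorm_mul_le_mul_opNorm _ _) (norm_nonneg _))
    _ = ‖R‖ ^ 2 * frobNorm A := by rw [opNorm_transpose]; ring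

lemma opNorm_one_kronecker_le [DecidableEq m] (U : Matrix n n ℝ) :
    ‖kronecker (1 : Matrix m m ℝ) U‖ ≤ ‖U‖ := by
  rw [l2_opNorm_def]
  refine ContinuousLinearMap.opNorm_le_bound _ (norm_nonneg U) fun x => ?_
  set Y : Matrix n m ℝ := of fun j i => x (i, j)
  have hx : x = toLp 2 (vec Y) := rfl
  have hUY : kronecker (1 : Matrix m m ℝ) U *ᵥ vec Y = vec (U * Y) := (vec_mul_eq_mulVec U Y).symm
  calc _ = frobNorm (U * Y) := by
        rw [frobNorm_eq_norm_toLp_vec, ← hUY, hx]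
        rfl
    _ ≤ ‖U‖ * frobNorm Y := frobNorm_mul_le_opNorm_mul U Y
    _ = ‖U‖ * ‖x‖ := by rw [frobNorm_eq_norm_toLp_vec, hx]

end MatrixNorms

section SymmPart

open scoped Matrix.Norms.L2Operator

variable {n : Type*}

def symmPart (M : Matrix n n ℝ) : Matrix n n ℝ := (2 : ℝ)⁻¹ • (M + Mᵀ)

lemma isHermitian_symmPart (M : Matrix n n ℝ) : (symmPart M).IsHermitian := by
  rw [IsHermitian, conjTranspose_eq_transpose_of_trivial, symmPart, transpose_smul,
    transpose_add, transpose_transpose, add_comm]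

variable [Fintype n]

lemma dotProduct_symmPart_mulVec (M : Matrix n n ℝ) (x : n → ℝ) :
    x ⬝ᵥ symmPart M *ᵥ x = x ⬝ᵥ M *ᵥ x := by
  rw [symmPart, smul_mulVec, add_mulVec, dotProduct_smul, dotProduct_add, mulVec_transpose,
    dotProduct_comm x (x ᵥ* M), ← dotProduct_mulVec, smul_eq_mul]
  ring

lemma frobNorm_symmPart_le (M : Matrix n n ℝ) : frobNorm (symmPart M) ≤ frobNorm M :=
  calc frobNorm (symmPart M) = ‖(2 : ℝ)⁻¹ • (WithLp.toLp 2 (vec M) + WithLp.toLp 2 (vec Mᵀ))‖ := by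
        rw [frobNorm_eq_norm_toLp_vec]; rfl
    _ ≤ 2⁻¹ * (frobNorm M + frobNorm Mᵀ) := by
        rw [norm_smul, frobNorm_eq_norm_toLp_vec, frobNorm_eq_norm_toLp_vec]
        norm_num
        exact norm_add_le _ _
    _ = frobNorm M := by rw [frobNorm_transpose]; ring

lemma opNorm_symmPart_le (M : Matrix n n ℝ) : ‖symmPart M‖ ≤ ‖M‖ :=
  calc ‖symmPart M‖ ≤ 2⁻¹ * (‖M‖ + ‖Mᵀ‖) := by
        rw [symmPart, norm_smul]
        norm_num
        exact norm_add_le _ _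
    _ = ‖M‖ := by rw [opNorm_transpose]; ring

end SymmPart

section Spectral

open WithLp Unitary
open scoped Matrix.Norms.L2Operator

variable {n : Type*} [Fintype n] [DecidableEq n]

lemma abs_eigenvalues_le_opNorm {B : Matrix n n ℝ} (hB : B.IsHermitian) (i : n) :
    |hB.eigenvalues i| ≤ ‖B‖ := by
  have h := l2_opNorm_mulVec B (hB.eigenvectorBasis i)
  rw [hB.mulVec_eigenvectorBasis, hB.eigenvectorBasis.norm_eq_one, mul_one] at h
  have hsmul : (EuclideanSpace.equiv n ℝ).symm (hB.eigenvalues i • ofLp (hB.eigenvectorBasis i)) =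
      hB.eigenvalues i • hB.eigenvectorBasis i := rfl
  rwa [hsmul, norm_smul, hB.eigenvectorBasis.norm_eq_one, mul_one, Real.norm_eq_abs] at h

lemma sum_sq_eigenvalues {B : Matrix n n ℝ} (hB : B.IsHermitian) :
    ∑ i, hB.eigenvalues i ^ 2 = frobNorm B ^ 2 := by
  have hBt : Bᵀ = B := by rw [← conjTranspose_eq_transpose_of_trivial]; exact hB
  set D : Matrix n n ℝ := diagonal (RCLike.ofReal ∘ hB.eigenvalues)
  calc ∑ i, hB.eigenvalues i ^ 2 = trace (D * D) := by
        simp [D, diagonal_mul_diagonal, trace_diagonal, sq]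
    _ = trace (conjStarAlgAut ℝ _ hB.eigenvectorUnitary (D * D)) := by
        rw [conjStarAlgAut_apply, trace_mul_cycle, coe_star_mul_self, one_mul]
    _ = trace (Bᵀ * B) := by rw [map_mul, ← hB.spectral_theorem, hBt]
    _ = frobNorm B ^ 2 := by
        rw [← vec_dotProduct_vec, frobNorm_eq_norm_toLp_vec, EuclideanSpace.real_norm_sq_eq]
        simp [dotProduct, sq]

lemma Matrix.PosSemidef.transpose_sqrt_mul_sqrt {A : Matrix n n ℝ} (hA : A.PosSemidef) :
    hA.sqrtᵀ * hA.sqrt = A := by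
  have hsqrt : hA.sqrt = conjStarAlgAut ℝ _ hA.1.eigenvectorUnitary
      (diagonal (Real.sqrt ∘ hA.1.eigenvalues)) := by
    rw [conjStarAlgAut_apply]; rfl
  rw [← conjTranspose_eq_transpose_of_trivial, ← star_eq_conjTranspose, hsqrt, ← map_star,
    ← map_mul, star_eq_conjTranspose, diagonal_conjTranspose, diagonal_mul_diagonal]
  conv_rhs => rw [hA.1.spectral_theorem]
  congr 2
  ext i
  simp [Real.mul_self_sqrt (hA.eigenvalues_nonneg i)]

lemma Matrix.PosSemidef.opNorm_sqrt_sq {A : Matrix n n ℝ} (hA : A.PosSemidef) :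
    ‖hA.sqrt‖ ^ 2 = ‖A‖ := by
  rw [sq, ← l2_opNorm_conjTranspose_mul_self, conjTranspose_eq_transpose_of_trivial,
    hA.transpose_sqrt_mul_sqrt]

end Spectral

lemma trace_mul_mul_transpose_eq_dotProduct {R m n : Type*} [CommSemiring R] [Fintype m]
    [Fintype n] [DecidableEq m] (X : Matrix m n R) (U : Matrix n n R) :
    trace (X * U * Xᵀ) = vec Xᵀ ⬝ᵥ kronecker (1 : Matrix m m R) U *ᵥ vec Xᵀ := by
  rw [kronecker, ← vec_mul_eq_mulVec, vec_dotProduct_vec, transpose_transpose, Matrix.mul_assoc]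

section GaussianReal

open Real

lemma gaussianPDFReal_mul_exp_mul_sq (s x : ℝ) :
    gaussianPDFReal 0 1 x * exp (s * x ^ 2) = (√(2 * π))⁻¹ * exp (-(1 / 2 - s) * x ^ 2) := by
  rw [gaussianPDFReal_def, mul_assoc, ← exp_add]
  simp only [NNReal.coe_one, mul_one, sub_zero]
  ring_nf

lemma integrable_exp_mul_sq_gaussianReal {s : ℝ} (hs : s < 1 / 2) :
    Integrable (fun x => exp (s * x ^ 2)) (gaussianReal 0 1) := by
  rw [gaussianReal_of_var_ne_zero _ one_ne_zero, integrable_withDensity_iff_integrable_smul'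
    (measurable_gaussianPDF 0 1) (ae_of_all _ fun _ => gaussianPDF_lt_top)]
  simp_rw [toReal_gaussianPDF, smul_eq_mul, gaussianPDFReal_mul_exp_mul_sq]
  exact (integrable_exp_neg_mul_sq (by linarith)).const_mul _

lemma integral_exp_mul_sq_gaussianReal {s : ℝ} (hs : s < 1 / 2) :
    ∫ x, exp (s * x ^ 2) ∂gaussianReal 0 1 = √(1 - 2 * s)⁻¹ := by
  rw [integral_gaussianReal_eq_integral_smul one_ne_zero]
  simp_rw [smul_eq_mul, gaussianPDFReal_mul_exp_mul_sq]
  rw [integral_const_mul, integral_gaussian, ← sqrt_inv, ← sqrt_mul (by positivity)]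
  congr 1
  have : 1 - 2 * s ≠ 0 := by linarith
  field_simp

lemma integrable_exp_mul_sq_sub_one_gaussianReal {s : ℝ} (hs : s < 1 / 2) :
    Integrable (fun x => exp (s * (x ^ 2 - 1))) (gaussianReal 0 1) := by
  refine ((integrable_exp_mul_sq_gaussianReal hs).const_mul (exp (-s))).congr (ae_of_all _ ?_)
  intro x
  simp only [← exp_add]
  ring_nf

lemma integral_exp_mul_sq_sub_one_le {s : ℝ} (hs : |s| ≤ 4⁻¹) :
    ∫ x, exp (s * (x ^ 2 - 1)) ∂gaussianReal 0 1 ≤ exp (4 * s ^ 2) := by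
  obtain ⟨hs₁, hs₂⟩ := abs_le.mp hs
  have hpos : 0 < 1 - 2 * s := by linarith
  have heq : ∫ x, exp (s * (x ^ 2 - 1)) ∂gaussianReal 0 1 = exp (-s) * √(1 - 2 * s)⁻¹ := by
    rw [← integral_exp_mul_sq_gaussianReal (by linarith), ← integral_const_mul]
    simp_rw [← exp_add]
    ring_nf
  have hinv : (1 - 2 * s)⁻¹ ≤ exp (4 * s ^ 2 + s) ^ 2 := by
    rw [← exp_nat_mul, inv_le_iff_one_le_mul₀ hpos]
    have hexp := add_one_le_exp ((2 : ℕ) * (4 * s ^ 2 + s))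
    push_cast at hexp ⊢
    nlinarith [mul_le_mul_of_nonneg_right hexp hpos.le,
      mul_nonneg (sq_nonneg s) (by linarith : 0 ≤ 1 - 4 * s)]
  calc ∫ x, exp (s * (x ^ 2 - 1)) ∂gaussianReal 0 1 = exp (-s) * √(1 - 2 * s)⁻¹ := heq
    _ ≤ exp (-s) * exp (4 * s ^ 2 + s) := by
      gcongr
      exact (sqrt_le_sqrt hinv).trans_eq (sqrt_sq (exp_nonneg _))
    _ = exp (4 * s ^ 2) := by rw [← exp_add]; ring_nf

lemma integral_sq_gaussianReal : ∫ x, x ^ 2 ∂gaussianReal 0 1 = 1 := by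
  rw [← variance_of_integral_eq_zero aemeasurable_id' integral_id_gaussianReal]
  simp

lemma chernoff_exponent_le_neg_min {K σ2 u : ℝ} (hK : 0 < K) (hσ : 0 < σ2) (hu : 0 < u) :
    let t := min (u / (8 * σ2)) (1 / (4 * K))
    4 * t ^ 2 * σ2 - t * u ≤ -16⁻¹ * min (u ^ 2 / σ2) (u / K) := by
  intro t
  rcases le_total (u / (8 * σ2)) (1 / (4 * K)) with h | h
  · have ht : t = u / (8 * σ2) := min_eq_left h
    have : 4 * t ^ 2 * σ2 - t * u = -16⁻¹ * (u ^ 2 / σ2) := by rw [ht]; field_simp; ring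
    exact this.trans_le (mul_le_mul_of_nonpos_left (min_le_left _ _) (by norm_num))
  · have ht : t = 1 / (4 * K) := min_eq_right h
    have hσu : 8 * σ2 ≤ 4 * K * u := by
      rw [div_le_div_iff₀ (by positivity) (by positivity)] at h
      linarith
    calc 4 * t ^ 2 * σ2 - t * u = (4 * σ2 - 4 * K * u) / (16 * K ^ 2) := by
          rw [ht]; field_simp; ring
      _ ≤ -16⁻¹ * (u / K) := by
          rw [div_le_iff₀ (by positivity)]
          field_simp
          nlinarith
      _ ≤ -16⁻¹ * min (u ^ 2 / σ2) (u / K) :=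
          mul_le_mul_of_nonpos_left (min_le_right _ _) (by norm_num)

end GaussianReal

section StdGaussian

open Real

variable {ι : Type*} [Fintype ι]

instance isProbabilityMeasure_stdGaussian_pi : IsProbabilityMeasure (stdGaussian ι) := by
  rw [_root_.stdGaussian]
  infer_instance

lemma exp_mul_sum_mul_sq_sub_one (t : ℝ) (a x : ι → ℝ) :
    exp (t * ∑ i, a i * (x i ^ 2 - 1)) = ∏ i, exp (t * a i * (x i ^ 2 - 1)) := by
  rw [← exp_sum, Finset.mul_sum]
  simp_rw [mul_assoc]

lemma integrable_exp_mul_sum_mul_sq_sub_one {t : ℝ} {a : ι → ℝ} (h : ∀ i, |t * a i| ≤ 4⁻¹) :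
    Integrable (fun x => exp (t * ∑ i, a i * (x i ^ 2 - 1))) (stdGaussian ι) := by
  simp_rw [exp_mul_sum_mul_sq_sub_one]
  exact Integrable.fintype_prod fun i => integrable_exp_mul_sq_sub_one_gaussianReal
    (lt_of_le_of_lt (le_abs_self _) ((h i).trans_lt (by norm_num)))

lemma integral_exp_mul_sum_mul_sq_sub_one_le {t : ℝ} {a : ι → ℝ} (h : ∀ i, |t * a i| ≤ 4⁻¹) :
    ∫ x, exp (t * ∑ i, a i * (x i ^ 2 - 1)) ∂stdGaussian ι ≤ exp (4 * t ^ 2 * ∑ i, a i ^ 2) := by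
  simp_rw [exp_mul_sum_mul_sq_sub_one, _root_.stdGaussian]
  rw [integral_fintype_prod_eq_prod (fun i y => exp (t * a i * (y ^ 2 - 1))), Finset.mul_sum,
    exp_sum]
  refine Finset.prod_le_prod (fun i _ => integral_nonneg fun _ => (exp_pos _).le) fun i _ => ?_
  calc _ ≤ exp (4 * (t * a i) ^ 2) := integral_exp_mul_sq_sub_one_le (h i)
    _ = _ := by ring_nf

lemma stdGaussian_upper_tail_sum_mul_sq_sub_one_le {a : ι → ℝ} {K σ2 u : ℝ} (hK : 0 ≤ K)
    (hσ : 0 ≤ σ2) (ha : ∀ i, |a i| ≤ K) (hσa : ∑ i, a i ^ 2 ≤ σ2) (hu : 0 < u) :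
    (stdGaussian ι).real {x | u ≤ ∑ i, a i * (x i ^ 2 - 1)} ≤
      exp (-16⁻¹ * min (u ^ 2 / σ2) (u / K)) := by
  have h_trivial (h : min (u ^ 2 / σ2) (u / K) ≤ 0) :
      (stdGaussian ι).real {x | u ≤ ∑ i, a i * (x i ^ 2 - 1)} ≤
        exp (-16⁻¹ * min (u ^ 2 / σ2) (u / K)) :=
    measureReal_le_one.trans (one_le_exp (by nlinarith))
  rcases hK.eq_or_lt with rfl | hK
  · exact h_trivial (by simp)
  rcases hσ.eq_or_lt with rfl | hσ
  · exact h_trivial (by simp)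
  set t := min (u / (8 * σ2)) (1 / (4 * K))
  have ht : 0 < t := lt_min (by positivity) (by positivity)
  have hta : ∀ i, |t * a i| ≤ 4⁻¹ := fun i => by
    rw [abs_mul, abs_of_pos ht]
    calc t * |a i| ≤ 1 / (4 * K) * K := by gcongr; exacts [min_le_right _ _, ha i]
      _ = 4⁻¹ := by field_simp
  calc _ ≤ exp (-t * u) * mgf (fun x => ∑ i, a i * (x i ^ 2 - 1)) (stdGaussian ι) t :=
        measure_ge_le_exp_mul_mgf u ht.le (integrable_exp_mul_sum_mul_sq_sub_one hta)
    _ ≤ exp (-t * u) * exp (4 * t ^ 2 * σ2) := by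
        gcongr
        refine (integral_exp_mul_sum_mul_sq_sub_one_le hta).trans ?_
        gcongr
    _ = exp (4 * t ^ 2 * σ2 - t * u) := by rw [← exp_add]; ring_nf
    _ ≤ _ := exp_le_exp.mpr (chernoff_exponent_le_neg_min hK hσ hu)

lemma integral_sum_mul_sq_stdGaussian (a : ι → ℝ) :
    ∫ x, ∑ i, a i * x i ^ 2 ∂stdGaussian ι = ∑ i, a i := by
  have hsq : Integrable (fun y : ℝ => y ^ 2) (gaussianReal 0 1) :=
    (memLp_id_gaussianReal 2).integrable_sq
  rw [_root_.stdGaussian,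
    integral_finsetSum (f := fun i (x : ι → ℝ) => a i * x i ^ 2) _
      fun i _ => (integrable_comp_eval (f := fun y => y ^ 2) (i := i) hsq).const_mul (a i)]
  refine Finset.sum_congr rfl fun i _ => ?_
  rw [integral_const_mul, integral_comp_eval (f := fun y => y ^ 2) hsq.aestronglyMeasurable,
    integral_sq_gaussianReal, mul_one]

lemma map_sum_mul_sq_stdGaussian_tail_le {a : ι → ℝ} {K σ2 u : ℝ} (hK : 0 ≤ K) (hσ : 0 ≤ σ2)
    (ha : ∀ i, |a i| ≤ K) (hσa : ∑ i, a i ^ 2 ≤ σ2) (hu : 0 < u) :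
    let ν := (stdGaussian ι).map fun x => ∑ i, a i * x i ^ 2
    ν.real {y | u < |y - ∫ z, z ∂ν|} ≤ 2 * exp (-16⁻¹ * min (u ^ 2 / σ2) (u / K)) := by
  intro ν
  have hmeas : Measurable fun x : ι → ℝ => ∑ i, a i * x i ^ 2 := by fun_prop
  have hmean : ∫ z, z ∂ν = ∑ i, a i := by
    rw [integral_map (f := fun z => z) hmeas.aemeasurable (by fun_prop),
      integral_sum_mul_sq_stdGaussian]
  have hsub : (fun x => ∑ i, a i * x i ^ 2) ⁻¹' {y | u < |y - ∑ i, a i|} ⊆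
      {x : ι → ℝ | u ≤ ∑ i, a i * (x i ^ 2 - 1)} ∪ {x | u ≤ ∑ i, -a i * (x i ^ 2 - 1)} := by
    intro x hx
    have hdev : ∑ i, a i * x i ^ 2 - ∑ i, a i = ∑ i, a i * (x i ^ 2 - 1) := by
      rw [← Finset.sum_sub_distrib]; ring_nf
    simp only [Set.mem_preimage, Set.mem_ofPred_eq, hdev] at hx
    simp only [Set.mem_union, Set.mem_ofPred_eq, neg_mul, Finset.sum_neg_distrib]
    exact le_abs.mp hx.le
  rw [hmean, map_measureReal_apply hmeas (measurableSet_lt measurable_const (by fun_prop)), two_mul]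
  refine (measureReal_mono hsub).trans ((measureReal_union_le _ _).trans (add_le_add ?_ ?_))
  · exact stdGaussian_upper_tail_sum_mul_sq_sub_one_le hK hσ ha hσa hu
  · exact stdGaussian_upper_tail_sum_mul_sq_sub_one_le hK hσ
      (fun i => (abs_neg (a i)).trans_le (ha i)) (by simpa using hσa) hu

end StdGaussian

lemma measureReal_lt_abs_sub_integral_eq_map {Ω : Type*} [MeasurableSpace Ω] {P : Measure Ω}
    {Y : Ω → ℝ} (hY : AEMeasurable Y P) (u : ℝ) :
    P.real {ω | u < |Y ω - ∫ ω', Y ω' ∂P|} =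
      (P.map Y).real {y | u < |y - ∫ z, z ∂P.map Y|} := by
  rw [integral_map (f := fun z => z) hY (by fun_prop),
    map_measureReal_apply_of_aemeasurable hY (measurableSet_lt measurable_const (by fun_prop))]
  rfl

section GaussianQuadraticForm

open WithLp

variable {ι : Type*} [Fintype ι]

-- Mathlib's `ProbabilityTheory.stdGaussian` is the one known to be rotation invariant.
lemma stdGaussian_eq_map_ofLp :
    stdGaussian ι = (ProbabilityTheory.stdGaussian (EuclideanSpace ℝ ι)).map ofLp := by
  rw [← map_pi_eq_stdGaussian, Measure.map_map (by fun_prop) (by fun_prop)]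
  exact Measure.map_id.symm

lemma map_dotProduct_mulVec_map_mulVec (μ : Measure (ι → ℝ)) (A R : Matrix ι ι ℝ) :
    (μ.map R.mulVec).map (fun x => x ⬝ᵥ A *ᵥ x) =
      μ.map (fun g => g ⬝ᵥ symmPart (Rᵀ * A * R) *ᵥ g) := by
  rw [Measure.map_map (by fun_prop) (by fun_prop)]
  congr 1
  ext g
  rw [Function.comp_apply, dotProduct_symmPart_mulVec, ← mulVec_mulVec, ← mulVec_mulVec,
    dotProduct_mulVec g Rᵀ, vecMul_transpose]

variable [DecidableEq ι]

instance isProbabilityMeasure_vecGaussian {Υ : Matrix ι ι ℝ} (hΥ : Υ.PosSemidef) :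
    IsProbabilityMeasure (vecGaussian hΥ) :=
  Measure.isProbabilityMeasure_map (by fun_prop)

lemma dotProduct_mulVec_eq_sum_eigenvalues_mul_sq {B : Matrix ι ι ℝ} (hB : B.IsHermitian)
    (y : EuclideanSpace ℝ ι) :
    ofLp y ⬝ᵥ B *ᵥ ofLp y = ∑ i, hB.eigenvalues i * hB.eigenvectorBasis.repr y i ^ 2 := by
  have hsymm := (isSymmetric_toEuclideanLin_iff (A := B)).mpr hB
  rw [← inner_toEuclideanCLM, ← hB.eigenvectorBasis.sum_inner_mul_inner]
  refine Finset.sum_congr rfl fun i _ => ?_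
  have hT : toEuclideanCLM (𝕜 := ℝ) B (hB.eigenvectorBasis i) =
      hB.eigenvalues i • hB.eigenvectorBasis i := by
    ext1
    rw [ofLp_toEuclideanCLM, hB.mulVec_eigenvectorBasis, ofLp_smul]
  rw [← coe_toEuclideanCLM_eq_toEuclideanLin] at hsymm
  have hTy := hsymm (hB.eigenvectorBasis i) y
  simp only [ContinuousLinearMap.coe_coe] at hTy
  rw [← hTy, hT, real_inner_comm, real_inner_smul_left, OrthonormalBasis.repr_apply_apply]
  ring

lemma map_dotProduct_mulVec_stdGaussian {B : Matrix ι ι ℝ} (hB : B.IsHermitian) :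
    (stdGaussian ι).map (fun g => g ⬝ᵥ B *ᵥ g) =
      (stdGaussian ι).map (fun g => ∑ i, hB.eigenvalues i * g i ^ 2) := by
  have hdiag : (fun g : ι → ℝ => g ⬝ᵥ B *ᵥ g) ∘ ofLp =
      ((fun g : ι → ℝ => ∑ i, hB.eigenvalues i * g i ^ 2) ∘ ofLp) ∘ hB.eigenvectorBasis.repr :=
    funext (dotProduct_mulVec_eq_sum_eigenvalues_mul_sq hB)
  rw [stdGaussian_eq_map_ofLp, Measure.map_map (by fun_prop) (by fun_prop),
    Measure.map_map (by fun_prop) (by fun_prop), hdiag,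
    ← Measure.map_map (by fun_prop) (by fun_prop), stdGaussian_map]

open scoped Matrix.Norms.L2Operator in
theorem hansonWright_vecGaussian {Ω : Type*} [MeasurableSpace Ω] {P : Measure Ω}
    {Y : Ω → ι → ℝ} {Υ : Matrix ι ι ℝ} (hΥ : Υ.PosSemidef) (hY : P.map Y = vecGaussian hΥ)
    (A : Matrix ι ι ℝ) {K σ2 u : ℝ} (hK : specNorm Υ * specNorm A ≤ K)
    (hσ : (specNorm Υ * frobNorm A) ^ 2 ≤ σ2) (hu : 0 < u) :
    P.real {ω | u < |Y ω ⬝ᵥ A *ᵥ Y ω - ∫ ω', Y ω' ⬝ᵥ A *ᵥ Y ω' ∂P|} ≤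
      2 * Real.exp (-16⁻¹ * min (u ^ 2 / σ2) (u / K)) := by
  set R := hΥ.sqrt
  have hB := isHermitian_symmPart (Rᵀ * A * R)
  have hYmeas : AEMeasurable Y P := .of_map_ne_zero (hY ▸ IsProbabilityMeasure.ne_zero _)
  have hlaw : P.map (fun ω => Y ω ⬝ᵥ A *ᵥ Y ω) =
      (stdGaussian ι).map fun g => ∑ i, hB.eigenvalues i * g i ^ 2 := by
    rw [← Function.comp_def (fun x => x ⬝ᵥ A *ᵥ x),
      ← AEMeasurable.map_map_of_aemeasurable (by fun_prop) hYmeas, hY, vecGaussian,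
      map_dotProduct_mulVec_map_mulVec, map_dotProduct_mulVec_stdGaussian hB]
  have hQ : AEMeasurable (fun ω => Y ω ⬝ᵥ A *ᵥ Y ω) P :=
    (by fun_prop : Continuous fun x => x ⬝ᵥ A *ᵥ x).measurable.comp_aemeasurable hYmeas
  rw [measureReal_lt_abs_sub_integral_eq_map hQ, hlaw]
  have hR : ‖R‖ ^ 2 = specNorm Υ := by
    rw [specNorm_eq_opNorm]
    exact hΥ.opNorm_sqrt_sq
  rw [← hR, specNorm_eq_opNorm] at hK
  rw [← hR] at hσ
  refine map_sum_mul_sq_stdGaussian_tail_le ((mul_nonneg (sq_nonneg _) (norm_nonneg _)).trans hK)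
    ((sq_nonneg _).trans hσ) (fun i => ?_) ?_ hu
  · exact (abs_eigenvalues_le_opNorm hB i).trans
      ((opNorm_symmPart_le _).trans ((opNorm_transpose_mul_mul_le R A).trans hK))
  · rw [sum_sq_eigenvalues hB]
    exact (pow_le_pow_left₀ (frobNorm_nonneg _) ((frobNorm_symmPart_le _).trans
      (frobNorm_transpose_mul_mul_le R A)) 2).trans hσ

end GaussianQuadraticForm

/-- Lemma 1: Hanson–Wright-type deviation bound for `tr(X U Xᵀ)`.
There is an absolute constant `c > 0` such that for every fixed matrix `U ∈ ℝ^{d×d}` and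
every random matrix `X ∈ ℝ^{n×d}` with `vec(Xᵀ) ~ N(0, Υ)` (`Υ` positive semidefinite),
and every `u > 0`,
`P(|tr(XUXᵀ) − E tr(XUXᵀ)| > u) ≤ 2 exp(−c min(u²/(n‖Υ‖²‖U‖_F²), u/(‖Υ‖‖U‖_F)))`. -/
theorem statement0 :
    ∃ c : ℝ, 0 < c ∧
      ∀ (n d : ℕ) (W : Type) [MeasureSpace W] [IsProbabilityMeasure (ℙ : Measure W)]
        (U : Matrix (Fin d) (Fin d) ℝ) (X : W → Matrix (Fin n) (Fin d) ℝ)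
        (Υ : Matrix (Fin n × Fin d) (Fin n × Fin d) ℝ) (hΥ : Υ.PosSemidef)
        (_ : Measure.map (fun w => fun p : Fin n × Fin d => X w p.1 p.2) ℙ = vecGaussian hΥ)
        (u : ℝ), 0 < u →
        (ℙ {w : W | u < |Matrix.trace (X w * U * (X w)ᵀ) -
              ∫ w', Matrix.trace (X w' * U * (X w')ᵀ) ∂ℙ|}).toReal ≤
          2 * Real.exp (-c * min (u ^ 2 / ((n : ℝ) * specNorm Υ ^ 2 * frobNorm U ^ 2))
              (u / (specNorm Υ * frobNorm U))) := by
  refine ⟨16⁻¹, by norm_num, fun n d W _ _ U X Υ hΥ hX u hu => ?_⟩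
  simp_rw [trace_mul_mul_transpose_eq_dotProduct]
  refine hansonWright_vecGaussian (Y := fun w => vec (X w)ᵀ) hΥ hX _ ?_ ?_ hu
  · refine mul_le_mul_of_nonneg_left ?_ (specNorm_nonneg Υ)
    rw [specNorm_eq_opNorm]
    exact (opNorm_one_kronecker_le U).trans (opNorm_le_frobNorm U)
  · rw [frobNorm_kronecker, frobNorm_one, Fintype.card_fin, mul_pow, mul_pow,
      Real.sq_sqrt (Nat.cast_nonneg n)]
    exact le_of_eq (by ring)
end
end

section
/- Under the eigenvalue assumptions on Ω*, let 0 < R ≤ ν_min/2 and let Ω, Ω' ∈ ℝ^{m×m} be symmetric matrices with ‖Ω − Ω*‖_F ≤ R and ‖Ω' − Ω*‖_F ≤ R (so that Ω and Ω' are positive definite). Then the function h(Ω) = −log det Ω + tr(Ω*⁻¹ Ω) satisfies (1/(8 ν_max²)) ‖Ω' − Ω‖_F² ≤ h(Ω') − h(Ω) − ⟨−Ω⁻¹ + Ω*⁻¹, Ω' − Ω⟩ ≤ (2/ν_min²) ‖Ω' − Ω‖_F², where ⟨A, B⟩ = tr(Aᵀ B). -/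
open MeasureTheory ProbabilityTheory Matrix
open scoped Classical ProbabilityTheory

noncomputable section

/-!
Along the segment `Ω + t • Δ`, `Δ = Ω' - Ω`, every point lies in the Frobenius ball around `Ω*`,
hence between `(ν_min - R) • 1` and `(ν_max + R) • 1` in the Loewner order. The trace terms of
`h` are linear, so the Bregman gap is `tr(Ω⁻¹Δ) - (log det Ω' - log det Ω)`, the linearization
error of `t ↦ log det (Ω + t • Δ)`, whose derivative is `tr((Ω + t • Δ)⁻¹Δ)`. The resolvent
identity writes the drop of this derivative from `0` to `t` as `t · tr(Ω⁻¹ Δ (Ω + t • Δ)⁻¹ Δ)`,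
which the eigenvalue bounds pin between `t ‖Δ‖_F² / (ν_max + R)²` and `t ‖Δ‖_F² / (ν_min - R)²`.
Integrating over `t ∈ [0, 1]` halves these bounds, and `R ≤ ν_min / 2 ≤ ν_max / 2` turns them into
the stated constants.
-/

open Set

section Frobenius

attribute [local instance] Matrix.frobeniusNormedAddCommGroup Matrix.frobeniusNormedSpace

variable {k l : Type*} [Fintype k] [Fintype l]

theorem frobNorm_eq_norm (M : Matrix k l ℝ) : frobNorm M = ‖M‖ := by
  rw [frobNorm, frobenius_norm_def, Real.sqrt_eq_rpow]
  simp only [Real.norm_eq_abs, Real.rpow_two, sq_abs]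

theorem frobNorm_sq_s3 (M : Matrix k l ℝ) : frobNorm M ^ 2 = (Mᵀ * M).trace := by
  rw [frobNorm, Real.sq_sqrt (by positivity), Finset.sum_comm]
  simp only [trace, diag_apply, mul_apply, transpose_apply, sq]

theorem abs_dotProduct_mulVec_le_frobNorm_mul (E : Matrix k k ℝ) (v : k → ℝ) :
    |v ⬝ᵥ E *ᵥ v| ≤ frobNorm E * ∑ i, v i ^ 2 := by
  have hv : ‖WithLp.toLp 2 v‖ ^ 2 = ∑ i, v i ^ 2 := by simp [EuclideanSpace.norm_sq_eq]
  calc |v ⬝ᵥ E *ᵥ v| = ‖replicateRow Unit v * (E * replicateCol Unit v)‖ := by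
        rw [← replicateCol_mulVec, replicateRow_mul_replicateCol, frobenius_norm_def]
        simp only [Real.norm_eq_abs, Finset.univ_unique, Finset.sum_singleton, of_apply, sq_abs,
          Real.rpow_two]
        rw [← Real.sqrt_eq_rpow, Real.sqrt_sq_eq_abs]
    _ ≤ ‖replicateRow Unit v‖ * (‖E‖ * ‖replicateCol Unit v‖) := by
        grw [frobenius_norm_mul, frobenius_norm_mul]
    _ = frobNorm E * ∑ i, v i ^ 2 := by
        rw [frobenius_norm_replicateRow, frobenius_norm_replicateCol, ← hv, frobNorm_eq_norm]
        ring

theorem frobNorm_add_smul_sub_sub_le {A B C : Matrix k l ℝ} {R t : ℝ}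
    (hA : frobNorm (A - C) ≤ R) (hB : frobNorm (B - C) ≤ R) (ht : t ∈ Icc (0 : ℝ) 1) :
    frobNorm (A + t • (B - A) - C) ≤ R := by
  simp only [frobNorm_eq_norm, ← dist_eq_norm, ← Metric.mem_closedBall] at *
  exact (convex_closedBall C R).add_smul_sub_mem hA hB ht

theorem mInner_eq_trace_mul_transpose (A B : Matrix k l ℝ) : mInner A B = (A * Bᵀ).trace := by
  simp only [mInner, trace, diag_apply, mul_apply, transpose_apply]

end Frobenius

theorem image_one_ge_of_hasDerivAt_ge {f f' : ℝ → ℝ} {C : ℝ}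
    (hf : ∀ t ∈ Icc (0 : ℝ) 1, HasDerivAt f (f' t) t)
    (h : ∀ t ∈ Icc (0 : ℝ) 1, f' 0 - C * t ≤ f' t) :
    f 0 + f' 0 - C / 2 ≤ f 1 := by
  let g t := f t - t * f' 0 + C * t ^ 2 / 2
  have hg : ∀ t ∈ Icc (0 : ℝ) 1, HasDerivAt g (f' t - f' 0 + C * t) t := fun t ht => by
    have := ((hf t ht).sub (hasDerivAt_mul_const (f' 0))).add
      (((hasDerivAt_pow 2 t).const_mul C).div_const 2)
    exact this.congr_deriv (by norm_num; ring)
  have hmono : MonotoneOn g (Icc 0 1) :=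
    monotoneOn_of_hasDerivWithinAt_nonneg (convex_Icc 0 1)
      (fun t ht => (hg t ht).continuousAt.continuousWithinAt)
      (fun t ht => (hg t (interior_subset ht)).hasDerivWithinAt)
      (fun t ht => by linarith [h t (interior_subset ht)])
  have := hmono (left_mem_Icc.2 zero_le_one) (right_mem_Icc.2 zero_le_one) zero_le_one
  simp only [g] at this
  linarith

namespace Matrix

section LoewnerOrder

variable {n : Type*} [DecidableEq n]

open scoped MatrixOrder

theorem posDef_of_smul_one_le {A : Matrix n n ℝ} {α : ℝ} (hα : 0 < α) (h : α • 1 ≤ A) :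
    A.PosDef := by
  simpa using (PosDef.one.smul hα).add_posSemidef (le_iff.1 h)

variable [Fintype n]

theorem smul_one_le_of_le_dotProduct_mulVec {A : Matrix n n ℝ} {α : ℝ} (hA : A.IsHermitian)
    (h : ∀ v, α * ∑ i, v i ^ 2 ≤ v ⬝ᵥ A *ᵥ v) : α • 1 ≤ A := by
  refine le_iff.2 <| .of_dotProduct_mulVec_nonneg (hA.sub (isHermitian_one.smul (.all α)))
    fun v => ?_
  simp only [star_trivial, sub_mulVec, dotProduct_sub, smul_mulVec, one_mulVec, dotProduct_smul,
    smul_eq_mul, show v ⬝ᵥ v = ∑ i, v i ^ 2 by simp only [dotProduct, sq]]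
  linarith [h v]

theorem le_smul_one_of_dotProduct_mulVec_le {A : Matrix n n ℝ} {β : ℝ} (hA : A.IsHermitian)
    (h : ∀ v, v ⬝ᵥ A *ᵥ v ≤ β * ∑ i, v i ^ 2) : A ≤ β • 1 := by
  refine le_iff.2 <| .of_dotProduct_mulVec_nonneg ((isHermitian_one.smul (.all β)).sub hA)
    fun v => ?_
  simp only [star_trivial, sub_mulVec, dotProduct_sub, smul_mulVec, one_mulVec, dotProduct_smul,
    smul_eq_mul, show v ⬝ᵥ v = ∑ i, v i ^ 2 by simp only [dotProduct, sq]]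
  linarith [h v]

theorem inv_mem_Icc_smul_one {A : Matrix n n ℝ} {α β : ℝ} (hα : 0 < α)
    (hA : A ∈ Icc (α • 1) (β • 1)) : A⁻¹ ∈ Icc (β⁻¹ • 1) (α⁻¹ • 1) := by
  obtain ⟨h1, h2⟩ := hA
  simp only [mem_Icc, ← Algebra.algebraMap_eq_smul_one] at *
  have hsa : IsSelfAdjoint A := by
    simpa using (IsSelfAdjoint.of_nonneg (sub_nonneg.mpr h1)).add (.algebraMap _ (.all α))
  rw [algebraMap_le_iff_le_spectrum] at h1
  rw [le_algebraMap_iff_spectrum_le] at h2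
  have hspec : ∀ x ∈ spectrum ℝ A, 0 < x := fun x hx => hα.trans_le (h1 x hx)
  have hunit : IsUnit A := spectrum.zero_notMem_iff ℝ |>.mp fun h0 => (hspec 0 h0).false
  have hcont : ContinuousOn (fun x : ℝ => x⁻¹) (spectrum ℝ A) :=
    continuousOn_inv₀.mono fun x hx => (hspec x hx).ne'
  rw [nonsing_inv_eq_ringInverse, ← cfc_ringInverse_id (R := ℝ) (a := A) hunit]
  exact ⟨algebraMap_le_cfc _ _ _ fun x hx => inv_anti₀ (hspec x hx) (h2 x hx),
    cfc_le_algebraMap _ _ _ fun x hx => inv_anti₀ hα (h1 x hx)⟩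

theorem trace_mul_nonneg_of_posSemidef {P C : Matrix n n ℝ} (hP : P.PosSemidef)
    (hC : C.PosSemidef) : 0 ≤ (P * C).trace := by
  have hS : (CFC.sqrt C).PosSemidef := (CFC.sqrt_nonneg C).posSemidef
  calc 0 ≤ (CFC.sqrt C * P * (CFC.sqrt C)ᴴ).trace :=
        (hP.mul_mul_conjTranspose_same _).trace_nonneg
    _ = (P * C).trace := by
        rw [hS.isHermitian.eq, trace_mul_cycle, CFC.sqrt_mul_sqrt_self C hC.nonneg,
          trace_mul_comm]

theorem trace_mul_le_trace_mul_of_le {A B C : Matrix n n ℝ} (hAB : A ≤ B) (hC : C.PosSemidef) :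
    (A * C).trace ≤ (B * C).trace := by
  have := trace_mul_nonneg_of_posSemidef (le_iff.1 hAB) hC
  rwa [Matrix.sub_mul, trace_sub, sub_nonneg] at this

theorem trace_mul_mem_Icc_of_mem_Icc {A C : Matrix n n ℝ} {α β : ℝ}
    (hA : A ∈ Icc (α • 1) (β • 1)) (hC : C.PosSemidef) :
    (A * C).trace ∈ Icc (α * C.trace) (β * C.trace) := by
  have h1 := trace_mul_le_trace_mul_of_le hA.1 hC
  have h2 := trace_mul_le_trace_mul_of_le hA.2 hC
  simp only [Matrix.smul_mul, Matrix.one_mul, trace_smul, smul_eq_mul] at h1 h2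
  exact ⟨h1, h2⟩

theorem trace_inv_mul_mul_inv_mul_mem_Icc {A B Δ : Matrix n n ℝ} {a b : ℝ} (ha : 0 < a)
    (hab : a ≤ b) (hΔ : Δ.IsHermitian) (hA : A ∈ Icc (a • 1) (b • 1))
    (hB : B ∈ Icc (a • 1) (b • 1)) :
    (A⁻¹ * Δ * B⁻¹ * Δ).trace ∈ Icc ((Δ * Δ).trace / b ^ 2) ((Δ * Δ).trace / a ^ 2) := by
  have hb : 0 < b := ha.trans_le hab
  have hΔΔ : (Δ * Δ).PosSemidef := by
    simpa only [hΔ.eq] using posSemidef_conjTranspose_mul_self Δ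
  have hC : (Δ * B⁻¹ * Δ).PosSemidef := by
    simpa only [hΔ.eq] using
      (posDef_of_smul_one_le ha hB.1).inv.posSemidef.mul_mul_conjTranspose_same Δ
  have hCtr : (Δ * B⁻¹ * Δ).trace = (B⁻¹ * (Δ * Δ)).trace := by
    rw [trace_mul_cycle, trace_mul_comm]
  obtain ⟨hC1, hC2⟩ := trace_mul_mem_Icc_of_mem_Icc (inv_mem_Icc_smul_one ha hB) hΔΔ
  obtain ⟨h1, h2⟩ := trace_mul_mem_Icc_of_mem_Icc (inv_mem_Icc_smul_one ha hA) hC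
  rw [hCtr] at h1 h2
  simp only [Matrix.mul_assoc] at h1 h2 hC1 hC2 ⊢
  constructor
  · calc (Δ * Δ).trace / b ^ 2 = b⁻¹ * (b⁻¹ * (Δ * Δ).trace) := by ring
      _ ≤ _ := by gcongr
      _ ≤ _ := h1
  · calc _ ≤ _ := h2
      _ ≤ a⁻¹ * (a⁻¹ * (Δ * Δ).trace) := by gcongr
      _ = (Δ * Δ).trace / a ^ 2 := by ring

end LoewnerOrder

section Derivative

variable {𝕜 n : Type*} [NontriviallyNormedField 𝕜] [Fintype n] [DecidableEq n]

open Polynomial in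
theorem hasDerivAt_det_one_add_smul (B : Matrix n n 𝕜) :
    HasDerivAt (fun r : 𝕜 => (1 + r • B).det) B.trace 0 := by
  have h := (det (1 + (X : 𝕜[X]) • B.map C)).hasDerivAt 0
  rw [derivative_det_one_add_X_smul] at h
  convert h using 1
  ext r
  simp [eval_det, ← smul_eq_mul_diagonal]

theorem hasDerivAt_det_add_smul (A Δ : Matrix n n 𝕜) {s : 𝕜} (hs : IsUnit (A + s • Δ).det) :
    HasDerivAt (fun t : 𝕜 => (A + t • Δ).det)
      ((A + s • Δ).det * ((A + s • Δ)⁻¹ * Δ).trace) s := by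
  set N := A + s • Δ
  have hfac : ∀ t : 𝕜, A + t • Δ = N * (1 + (t - s) • (N⁻¹ * Δ)) := fun t => by
    rw [Matrix.mul_add, Matrix.mul_one, Matrix.mul_smul, ← Matrix.mul_assoc,
      mul_nonsing_inv _ hs, Matrix.one_mul]
    simp only [N]; module
  simp only [hfac, det_mul]
  have h := hasDerivAt_det_one_add_smul (N⁻¹ * Δ)
  rw [← sub_self s] at h
  exact (h.comp_sub_const s s).const_mul N.det

end Derivative

theorem hasDerivAt_log_det_add_smul {n : Type*} [Fintype n] [DecidableEq n]
    (A Δ : Matrix n n ℝ) {s : ℝ} (hs : (A + s • Δ).det ≠ 0) :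
    HasDerivAt (fun t : ℝ => Real.log (A + t • Δ).det) ((A + s • Δ)⁻¹ * Δ).trace s := by
  have := (hasDerivAt_det_add_smul A Δ hs.isUnit).log hs
  rwa [mul_div_cancel_left₀ _ hs] at this

open scoped MatrixOrder in
theorem mem_Icc_smul_one_of_frobNorm_sub_le {n : Type*} [Fintype n] [DecidableEq n]
    {A B : Matrix n n ℝ} {ν₁ ν₂ R : ℝ} (hA : A.IsHermitian)
    (hB : ∀ v : n → ℝ, ν₁ * ∑ i, v i ^ 2 ≤ v ⬝ᵥ B *ᵥ v ∧ v ⬝ᵥ B *ᵥ v ≤ ν₂ * ∑ i, v i ^ 2)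
    (hAB : frobNorm (A - B) ≤ R) : A ∈ Icc ((ν₁ - R) • 1) ((ν₂ + R) • 1) := by
  have hpert (v : n → ℝ) : |v ⬝ᵥ A *ᵥ v - v ⬝ᵥ B *ᵥ v| ≤ R * ∑ i, v i ^ 2 := by
    rw [← dotProduct_sub, ← sub_mulVec]
    exact (abs_dotProduct_mulVec_le_frobNorm_mul _ v).trans (by gcongr)
  refine ⟨smul_one_le_of_le_dotProduct_mulVec hA fun v => ?_,
    le_smul_one_of_dotProduct_mulVec_le hA fun v => ?_⟩
  · linarith [(hB v).1, (abs_le.1 (hpert v)).1]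
  · linarith [(hB v).2, (abs_le.1 (hpert v)).2]

open scoped MatrixOrder in
theorem trace_inv_mul_sub_log_det_sub_mem_Icc {n : Type*} [Fintype n] [DecidableEq n]
    {Ω Δ : Matrix n n ℝ} {a b : ℝ} (ha : 0 < a) (hab : a ≤ b) (hΔ : Δ.IsHermitian)
    (hseg : ∀ t ∈ Icc (0 : ℝ) 1, Ω + t • Δ ∈ Icc (a • 1) (b • 1)) :
    (Ω⁻¹ * Δ).trace - (Real.log (Ω + Δ).det - Real.log Ω.det) ∈
      Icc ((Δ * Δ).trace / (2 * b ^ 2)) ((Δ * Δ).trace / (2 * a ^ 2)) := by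
  set f : ℝ → ℝ := fun t => Real.log (Ω + t • Δ).det
  set f' : ℝ → ℝ := fun t => ((Ω + t • Δ)⁻¹ * Δ).trace
  have hpos (t : ℝ) (ht : t ∈ Icc (0 : ℝ) 1) : (Ω + t • Δ).PosDef :=
    posDef_of_smul_one_le ha (hseg t ht).1
  have h0 : (0 : ℝ) ∈ Icc (0 : ℝ) 1 := left_mem_Icc.2 zero_le_one
  have hf (t : ℝ) (ht : t ∈ Icc (0 : ℝ) 1) : HasDerivAt f (f' t) t :=
    hasDerivAt_log_det_add_smul Ω Δ (hpos t ht).det_pos.ne'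
  have hgap (t : ℝ) (ht : t ∈ Icc (0 : ℝ) 1) : f' 0 - f' t ∈
      Icc (t * ((Δ * Δ).trace / b ^ 2)) (t * ((Δ * Δ).trace / a ^ 2)) := by
    have hres : f' 0 - f' t = t * (Ω⁻¹ * Δ * (Ω + t • Δ)⁻¹ * Δ).trace := by
      have hΩ : IsUnit Ω := by simpa using (hpos 0 h0).isUnit
      simp only [f', zero_smul, add_zero]
      rw [← trace_sub, ← Matrix.sub_mul, inv_sub_inv (iff_of_true hΩ (hpos t ht).isUnit),
        add_sub_cancel_left, Matrix.mul_smul, Matrix.smul_mul, Matrix.smul_mul, trace_smul,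
        smul_eq_mul]
    have hΩ : Ω ∈ Icc (a • 1) (b • 1) := by simpa using hseg 0 h0
    obtain ⟨h1, h2⟩ := trace_inv_mul_mul_inv_mul_mem_Icc ha hab hΔ hΩ (hseg t ht)
    rw [hres]
    exact ⟨mul_le_mul_of_nonneg_left h1 ht.1, mul_le_mul_of_nonneg_left h2 ht.1⟩
  have hupper := image_one_ge_of_hasDerivAt_ge hf (C := (Δ * Δ).trace / a ^ 2) fun t ht => by
    linarith [(hgap t ht).2]
  have hlower := image_one_ge_of_hasDerivAt_ge (f := -f) (f' := -f') (fun t ht => (hf t ht).neg)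
    (C := -((Δ * Δ).trace / b ^ 2)) fun t ht => by
      simp only [Pi.neg_apply]
      linarith [(hgap t ht).1]
  simp only [f, f', Pi.neg_apply, zero_smul, add_zero, one_smul] at hupper hlower
  rw [mul_comm 2 (b ^ 2), mul_comm 2 (a ^ 2), ← div_div, ← div_div]
  constructor <;> linarith

end Matrix

theorem statement3_general (m : ℕ)
    (Ωstar Ω Ω' : Matrix (Fin m) (Fin m) ℝ)
    (νmin νmax R : ℝ)
    (hνmin : 0 < νmin) (hνle : νmin ≤ νmax)
    (hΩeig : ∀ v : Fin m → ℝ, νmin * (∑ i, v i ^ 2) ≤ v ⬝ᵥ Ωstar.mulVec v ∧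
      v ⬝ᵥ Ωstar.mulVec v ≤ νmax * (∑ i, v i ^ 2))
    (hR : R ≤ νmin / 2)
    (hΩsym : Ω.IsSymm) (hΩ'sym : Ω'.IsSymm)
    (hΩ : frobNorm (Ω - Ωstar) ≤ R) (hΩ' : frobNorm (Ω' - Ωstar) ≤ R) :
    1 / (8 * νmax ^ 2) * frobNorm (Ω' - Ω) ^ 2 ≤
      (-Real.log (Ω').det + Matrix.trace (Ωstar⁻¹ * Ω')) -
        (-Real.log Ω.det + Matrix.trace (Ωstar⁻¹ * Ω)) -
        mInner (-Ω⁻¹ + Ωstar⁻¹) (Ω' - Ω) ∧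
    (-Real.log (Ω').det + Matrix.trace (Ωstar⁻¹ * Ω')) -
        (-Real.log Ω.det + Matrix.trace (Ωstar⁻¹ * Ω)) -
        mInner (-Ω⁻¹ + Ωstar⁻¹) (Ω' - Ω) ≤
      2 / νmin ^ 2 * frobNorm (Ω' - Ω) ^ 2 := by
  have hR0 : 0 ≤ R := (Real.sqrt_nonneg _).trans hΩ
  have hΔ : (Ω' - Ω).IsSymm := hΩ'sym.sub hΩsym
  have hgap := trace_inv_mul_sub_log_det_sub_mem_Icc (a := νmin - R) (b := νmax + R)
    (by linarith) (by linarith) (isHermitian_iff_isSymm.2 hΔ) fun t ht =>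
      mem_Icc_smul_one_of_frobNorm_sub_le (isHermitian_iff_isSymm.2 (hΩsym.add (hΔ.smul t)))
        hΩeig (frobNorm_add_smul_sub_sub_le hΩ hΩ' ht)
  have hgap_eq : (-Real.log Ω'.det + (Ωstar⁻¹ * Ω').trace) -
      (-Real.log Ω.det + (Ωstar⁻¹ * Ω).trace) - mInner (-Ω⁻¹ + Ωstar⁻¹) (Ω' - Ω) =
      (Ω⁻¹ * (Ω' - Ω)).trace - (Real.log (Ω + (Ω' - Ω)).det - Real.log Ω.det) := by
    rw [mInner_eq_trace_mul_transpose, hΔ.eq, add_sub_cancel]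
    simp only [Matrix.add_mul, Matrix.neg_mul, Matrix.mul_sub, trace_add, trace_neg, trace_sub]
    ring
  set F := ((Ω' - Ω) * (Ω' - Ω)).trace
  have hF : frobNorm (Ω' - Ω) ^ 2 = F := by rw [frobNorm_sq_s3, hΔ.eq]
  have hF0 : 0 ≤ F := hF ▸ sq_nonneg _
  have hb : 0 < νmax + R := by linarith
  rw [hgap_eq, hF]
  constructor
  · calc 1 / (8 * νmax ^ 2) * F = F / (8 * νmax ^ 2) := one_div_mul_eq_div _ _
      _ ≤ F / (2 * (νmax + R) ^ 2) := div_le_div_of_nonneg_left hF0 (by positivity) (by nlinarith)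
      _ ≤ _ := hgap.1
  · calc _ ≤ F / (2 * (νmin - R) ^ 2) := hgap.2
      _ ≤ F / (νmin ^ 2 / 2) := div_le_div_of_nonneg_left hF0 (by positivity) (by nlinarith)
      _ = 2 / νmin ^ 2 * F := by field_simp

/-- Lemma 5: strong convexity and smoothness of the population loss in `Ω`.
Under the eigenvalue assumptions on `Ω*`, for `0 < R ≤ ν_min/2` and symmetric `Ω, Ω'` in the
Frobenius ball of radius `R` around `Ω*`, the function `h(Ω) = −log det Ω + tr(Ω*⁻¹ Ω)`
satisfies `(1/(8ν_max²))‖Ω'−Ω‖_F² ≤ h(Ω') − h(Ω) − ⟨−Ω⁻¹ + Ω*⁻¹, Ω'−Ω⟩ ≤ (2/ν_min²)‖Ω'−Ω‖_F²`. -/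
theorem statement3 (m : ℕ)
    (Ωstar Ω Ω' : Matrix (Fin m) (Fin m) ℝ)
    (νmin νmax R : ℝ)
    (hνmin : 0 < νmin) (hνle : νmin ≤ νmax)
    (hΩsymm : Ωstar.IsSymm)
    (hΩeig : ∀ v : Fin m → ℝ, νmin * (∑ i, v i ^ 2) ≤ v ⬝ᵥ Ωstar.mulVec v ∧
      v ⬝ᵥ Ωstar.mulVec v ≤ νmax * (∑ i, v i ^ 2))
    (hRpos : 0 < R) (hR : R ≤ νmin / 2)
    (hΩsym : Ω.IsSymm) (hΩ'sym : Ω'.IsSymm)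
    (hΩ : frobNorm (Ω - Ωstar) ≤ R) (hΩ' : frobNorm (Ω' - Ωstar) ≤ R) :
    1 / (8 * νmax ^ 2) * frobNorm (Ω' - Ω) ^ 2 ≤
      (-Real.log (Ω').det + Matrix.trace (Ωstar⁻¹ * Ω')) -
        (-Real.log Ω.det + Matrix.trace (Ωstar⁻¹ * Ω)) -
        mInner (-Ω⁻¹ + Ωstar⁻¹) (Ω' - Ω) ∧
    (-Real.log (Ω').det + Matrix.trace (Ωstar⁻¹ * Ω')) -
        (-Real.log Ω.det + Matrix.trace (Ωstar⁻¹ * Ω)) -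
        mInner (-Ω⁻¹ + Ωstar⁻¹) (Ω' - Ω) ≤
      2 / νmin ^ 2 * frobNorm (Ω' - Ω) ^ 2 :=
  statement3_general m Ωstar Ω Ω' νmin νmax R hνmin hνle hΩeig hR hΩsym hΩ'sym hΩ hΩ'
end
end
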